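/- arXiv:2111.11270 — 3 statements merged into one kernel-verified Lean document; each statement's English description precedes it below -/
import Mathlib

section
/- For all μ, τ ∈ ℝ, the minimum over γ ∈ ℝ of |M|² + 2|det M|, where M is the symmetric matrix with entries M₁₁ = μ, M₁₂ = M₂₁ = τ, M₂₂ = γ, equals Q̄(μ,τ), where Q̄(μ,τ) = (μ²+τ²)²/μ² if |μ| > |τ|, and Q̄(μ,τ) = 4τ² if |μ| ≤ |τ|. Moreover the minimum is attained. -/
/-- The extended Sadowsky energy density. -/
noncomputable def Qbar (μ τ : ℝ) : ℝ :=
  if |τ| < |μ| then (μ ^ 2 + τ ^ 2) ^ 2 / μ ^ 2 else 4 * τ ^ 2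

/-- For all `μ, τ`, the minimum over `γ` of `|M|² + 2|det M|`, where
`M = !![μ, τ; τ, γ]` (so `|M|² = μ² + 2τ² + γ²` and `det M = μγ − τ²`),
equals `Q̄(μ,τ)`, and the minimum is attained. -/
theorem qbar_is_min (μ τ : ℝ) :
    IsLeast {v : ℝ | ∃ γ : ℝ, v = (μ ^ 2 + 2 * τ ^ 2 + γ ^ 2) + 2 * |μ * γ - τ ^ 2|}
      (Qbar μ τ) := by
  unfold Qbar
  constructor
  · by_cases h : |τ| < |μ|
    · have hμ : μ ≠ 0 := by
        intro h0; rw [h0] at h; simp at h; exact absurd h (not_lt.2 (abs_nonneg τ))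
      refine ⟨τ ^ 2 / μ, ?_⟩
      rw [if_pos h]
      have : μ * (τ ^ 2 / μ) - τ ^ 2 = 0 := by field_simp; ring
      rw [this, abs_zero]
      field_simp
      ring
    · refine ⟨μ, ?_⟩
      rw [if_neg h]
      have hτ : μ ^ 2 ≤ τ ^ 2 := by
        have := not_lt.1 h
        nlinarith [abs_nonneg μ, abs_nonneg τ, sq_abs μ, sq_abs τ]
      have : μ * μ - τ ^ 2 ≤ 0 := by nlinarith
      rw [abs_of_nonpos this]
      ring
  · rintro v ⟨γ, rfl⟩
    by_cases h : |τ| < |μ|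
    · rw [if_pos h]
      have hτ : τ ^ 2 < μ ^ 2 := by
        nlinarith [abs_nonneg μ, abs_nonneg τ, sq_abs μ, sq_abs τ]
      have hμ2 : (0:ℝ) < μ ^ 2 := by nlinarith [sq_nonneg τ]
      rw [div_le_iff₀ hμ2]
      rcases abs_cases (μ * γ - τ ^ 2) with ⟨he, hs⟩ | ⟨he, hs⟩ <;> rw [he] <;>
        nlinarith [sq_nonneg τ, sq_nonneg (μ * γ - τ ^ 2), sq_nonneg (μ * γ + τ ^ 2)]
    · rw [if_neg h]
      have hτ : μ ^ 2 ≤ τ ^ 2 := by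
        have := not_lt.1 h
        nlinarith [abs_nonneg μ, abs_nonneg τ, sq_abs μ, sq_abs τ]
      have : τ ^ 2 - μ * γ ≤ |μ * γ - τ ^ 2| := by
        rw [abs_sub_comm]; exact le_abs_self _
      nlinarith [sq_nonneg (μ - γ)]
end

section
/- The function Q̄ : ℝ² → ℝ defined by Q̄(μ,τ) = (μ²+τ²)²/μ² for |μ| > |τ| and Q̄(μ,τ) = 4τ² for |μ| ≤ |τ| is convex on ℝ². -/
theorem convexOn_of_le_of_exists_eq {𝕜 E β ι : Type*} [Semiring 𝕜] [PartialOrder 𝕜]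
    [AddCommMonoid E] [SMul 𝕜 E] [AddCommMonoid β] [PartialOrder β] [IsOrderedAddMonoid β]
    [SMul 𝕜 β] [PosSMulMono 𝕜 β] {s : Set E} {f : E → β} {g : ι → E → β}
    (hg : ∀ i, ConvexOn 𝕜 s (g i)) (hs : Convex 𝕜 s) (hle : ∀ i, ∀ x ∈ s, g i x ≤ f x)
    (hex : ∀ x ∈ s, ∃ i, g i x = f x) : ConvexOn 𝕜 s f := by
  refine ⟨hs, fun x hx y hy a b ha hb hab => ?_⟩
  obtain ⟨i, hi⟩ := hex _ (hs hx hy ha hb hab)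
  calc f (a • x + b • y) = g i (a • x + b • y) := hi.symm
    _ ≤ a • g i x + b • g i y := (hg i).2 hx hy ha hb hab
    _ ≤ a • f x + b • f y := by gcongr <;> exact hle i _ ‹_›

noncomputable def sadowskyForm (r : ℝ) : ℝ × ℝ →ₗ[ℝ] ℝ :=
  (1 - r ^ 2) • LinearMap.fst ℝ ℝ ℝ + (2 * r) • LinearMap.snd ℝ ℝ ℝ

theorem convexOn_sq_sadowskyForm (r : ℝ) :
    ConvexOn ℝ Set.univ fun p => sadowskyForm r p ^ 2 :=
  (even_two.convexOn_pow (𝕜 := ℝ)).comp_linearMap (sadowskyForm r)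

theorem sq_le_div_of_sq_le_one {r : ℝ} (hr : r ^ 2 ≤ 1) (μ τ : ℝ) (hμ : μ ≠ 0) :
    ((1 - r ^ 2) * μ + 2 * r * τ) ^ 2 ≤ (μ ^ 2 + τ ^ 2) ^ 2 / μ ^ 2 := by
  rw [le_div_iff₀ (by positivity)]
  -- `(μ² + τ²)² - (((1 - r²) μ + 2 r τ) μ)² = (r μ - τ)² ((r μ + τ)² + 2 (1 - r²) μ²)`
  nlinarith [mul_nonneg (sq_nonneg (r * μ - τ)) (sq_nonneg (r * μ + τ)),
    mul_nonneg (mul_nonneg (sub_nonneg.mpr hr) (sq_nonneg μ)) (sq_nonneg (r * μ - τ))]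

theorem sq_le_four_mul_sq_of_abs_le {r : ℝ} (hr : r ^ 2 ≤ 1) {μ τ : ℝ} (h : |μ| ≤ |τ|) :
    ((1 - r ^ 2) * μ + 2 * r * τ) ^ 2 ≤ 4 * τ ^ 2 := by
  have hr' : 0 ≤ 1 - r ^ 2 := sub_nonneg.mpr hr
  have hbound : |(1 - r ^ 2) * μ + 2 * r * τ| ≤ 2 * |τ| :=
    calc |(1 - r ^ 2) * μ + 2 * r * τ| ≤ (1 - r ^ 2) * |μ| + 2 * |r| * |τ| :=
          (abs_add_le _ _).trans_eq (by rw [abs_mul, abs_mul, abs_mul, abs_of_nonneg hr', abs_two])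
      _ ≤ (1 - r ^ 2) * |τ| + 2 * |r| * |τ| := by gcongr
      _ = 2 * |τ| - (1 - |r|) ^ 2 * |τ| := by rw [← sq_abs r]; ring
      _ ≤ 2 * |τ| := sub_le_self _ (by positivity)
  obtain ⟨hlower, hupper⟩ := abs_le.mp hbound
  calc ((1 - r ^ 2) * μ + 2 * r * τ) ^ 2 ≤ (2 * |τ|) ^ 2 := sq_le_sq' hlower hupper
    _ = 4 * τ ^ 2 := by rw [mul_pow, sq_abs]; norm_num

theorem sq_le_qbar {r : ℝ} (hr : r ^ 2 ≤ 1) (μ τ : ℝ) :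
    ((1 - r ^ 2) * μ + 2 * r * τ) ^ 2 ≤ Qbar μ τ := by
  unfold Qbar
  split_ifs with h
  · exact sq_le_div_of_sq_le_one hr μ τ (abs_pos.mp ((abs_nonneg τ).trans_lt h))
  · exact sq_le_four_mul_sq_of_abs_le hr (not_lt.mp h)

theorem exists_sq_eq_qbar (μ τ : ℝ) :
    ∃ r : ℝ, r ^ 2 ≤ 1 ∧ ((1 - r ^ 2) * μ + 2 * r * τ) ^ 2 = Qbar μ τ := by
  unfold Qbar
  split_ifs with h
  · have hμ : μ ≠ 0 := abs_pos.mp ((abs_nonneg τ).trans_lt h)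
    refine ⟨τ / μ, ?_, ?_⟩
    · rw [div_pow, div_le_one (by positivity), ← sq_abs τ, ← sq_abs μ]
      exact pow_le_pow_left₀ (abs_nonneg τ) h.le 2
    · field_simp
      ring
  · exact ⟨1, by norm_num, by ring⟩

/-- The extended Sadowsky energy density `Q̄` is convex on `ℝ²`. -/
theorem qbar_convex : ConvexOn ℝ Set.univ (fun p : ℝ × ℝ => Qbar p.1 p.2) := by
  refine convexOn_of_le_of_exists_eq (g := fun (r : {r : ℝ // r ^ 2 ≤ 1}) p => sadowskyForm r p ^ 2)
    (fun r => convexOn_sq_sadowskyForm r) convex_univ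
    (fun r p _ => sq_le_qbar r.2 p.1 p.2) (fun p _ => ?_)
  obtain ⟨r, hr, heq⟩ := exists_sq_eq_qbar p.1 p.2
  exact ⟨⟨r, hr⟩, heq⟩
end

section
/- Let I = (0,ℓ) and let (y, d₁, d₂, d₃) with y ∈ W^{2,2}(I;ℝ³), (d₁|d₂|d₃)ᵀ ∈ W^{1,2}(I;SO(3)), y' = d₁, and d₁'·d₂ = 0 a.e. Suppose y is planar, i.e. there is a unit vector k with d₁(s)·k = 0 for all s, and suppose d₁'·d₃ > 0 a.e. on I. Then d₂ is constant on I and d₂ = k or d₂ = −k. -/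
/-!
Write `d₃ = d₁ ⨯₃ d₂`. Differentiating `|d₁|² = 1` and `d₁ · k = 0` shows `d₁' ⊥ d₁, k`, and the
constraint gives `d₁' ⊥ d₂`, so `d₁' = (d₁' · d₃) d₃`. Where the curvature `d₁' · d₃` is nonzero
this forces `k ⊥ d₃`; together with `k ⊥ d₁` we get `k = (k · d₂) d₂`, i.e. `(k · d₂)² = 1`.
This holds a.e., hence everywhere by continuity of `d₂`, and the continuous function `k · d₂`
with values in `{1, -1}` on the interval `[0, ℓ]` is constant.
-/

open Matrix MeasureTheory Set Filter Topology

section Deriv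

variable {𝕜 ι : Type*} [NontriviallyNormedField 𝕜] [Fintype ι] {f g : 𝕜 → ι → 𝕜}
  {f' g' : ι → 𝕜} {t : 𝕜}

theorem HasDerivAt.dotProduct (hf : HasDerivAt f f' t) (hg : HasDerivAt g g' t) :
    HasDerivAt (fun s => f s ⬝ᵥ g s) (f' ⬝ᵥ g t + f t ⬝ᵥ g') t := by
  have hsum := HasDerivAt.fun_sum (u := Finset.univ) fun i _ =>
    (hasDerivAt_pi.1 hf i).mul (hasDerivAt_pi.1 hg i)
  unfold _root_.dotProduct
  rwa [← Finset.sum_add_distrib]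

theorem HasDerivAt.dotProduct_eq_zero_of_eventually_eq {c : 𝕜} (hf : HasDerivAt f f' t)
    (hg : HasDerivAt g g' t) (h : ∀ᶠ s in 𝓝 t, f s ⬝ᵥ g s = c) :
    f' ⬝ᵥ g t + f t ⬝ᵥ g' = 0 :=
  (hf.dotProduct hg).unique ((hasDerivAt_const t c).congr_of_eventuallyEq h)

end Deriv

/-- Parseval's identity in the orthonormal basis `a, b, a ⨯₃ b`. -/
theorem dotProduct_cross_mul_dotProduct_cross {a b : Fin 3 → ℝ} (ha : a ⬝ᵥ a = 1)
    (hb : b ⬝ᵥ b = 1) (hab : a ⬝ᵥ b = 0) (u v : Fin 3 → ℝ) :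
    (u ⬝ᵥ a ⨯₃ b) * (v ⬝ᵥ a ⨯₃ b) =
      u ⬝ᵥ v - (u ⬝ᵥ a) * (v ⬝ᵥ a) - (u ⬝ᵥ b) * (v ⬝ᵥ b) := by
  have lagrange : (u ⬝ᵥ a ⨯₃ b) * (v ⬝ᵥ a ⨯₃ b) =
      (u ⬝ᵥ v) * ((a ⬝ᵥ a) * (b ⬝ᵥ b) - (a ⬝ᵥ b) ^ 2)
      - (u ⬝ᵥ a) * ((v ⬝ᵥ a) * (b ⬝ᵥ b) - (v ⬝ᵥ b) * (a ⬝ᵥ b))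
      + (u ⬝ᵥ b) * ((v ⬝ᵥ a) * (a ⬝ᵥ b) - (v ⬝ᵥ b) * (a ⬝ᵥ a)) := by
    simp only [crossProduct, dotProduct, Fin.sum_univ_three, LinearMap.mk₂_apply, cons_val]
    ring
  rw [lagrange, ha, hb, hab]
  ring

/-- `v` spans the line `ℝ (a ⨯₃ b)`, so a unit vector `k` orthogonal to both `v` and `a` is `±b`. -/
theorem sq_dotProduct_eq_one_of_orthogonal {a b k v : Fin 3 → ℝ} (ha : a ⬝ᵥ a = 1)
    (hb : b ⬝ᵥ b = 1) (hab : a ⬝ᵥ b = 0) (hk : k ⬝ᵥ k = 1) (hka : k ⬝ᵥ a = 0)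
    (hva : v ⬝ᵥ a = 0) (hvb : v ⬝ᵥ b = 0) (hvk : v ⬝ᵥ k = 0) (hv : v ⬝ᵥ a ⨯₃ b ≠ 0) :
    (k ⬝ᵥ b) ^ 2 = 1 := by
  have hkc : k ⬝ᵥ a ⨯₃ b = 0 := by
    have h := dotProduct_cross_mul_dotProduct_cross ha hb hab v k
    rw [hva, hvb, hvk] at h
    exact (mul_eq_zero.1 (by linarith)).resolve_left hv
  have h := dotProduct_cross_mul_dotProduct_cross ha hb hab k k
  rw [hkc, hka, hk] at h
  linarith

theorem eq_of_dotProduct_eq_one {ι : Type*} [Fintype ι] {u v : ι → ℝ} (hu : u ⬝ᵥ u = 1)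
    (hv : v ⬝ᵥ v = 1) (huv : u ⬝ᵥ v = 1) : u = v := by
  have h : (u - v) ⬝ᵥ (u - v) = 0 := by
    simp only [sub_dotProduct, dotProduct_sub, dotProduct_comm v u, hu, hv, huv]
    ring
  exact sub_eq_zero.1 (dotProduct_self_eq_zero.1 h)

theorem planar_frame_d2_const_general (ℓ : ℝ) (hℓ : 0 < ℓ)
    (d₁ d₂ d₃ : ℝ → Fin 3 → ℝ) (k : Fin 3 → ℝ)
    (hd₂cont : ContinuousOn d₂ (Set.Icc 0 ℓ))
    (hdiff : ∀ t ∈ Set.Ioo 0 ℓ, DifferentiableAt ℝ d₁ t ∧ DifferentiableAt ℝ d₂ t)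
    (hframe : ∀ t ∈ Set.Icc 0 ℓ,
      d₁ t ⬝ᵥ d₁ t = 1 ∧ d₂ t ⬝ᵥ d₂ t = 1 ∧ d₁ t ⬝ᵥ d₂ t = 0 ∧
      d₃ t = d₁ t ⨯₃ d₂ t)
    (hconstraint : ∀ᵐ t ∂(volume.restrict (Set.Ioo 0 ℓ)), deriv d₁ t ⬝ᵥ d₂ t = 0)
    (hk : k ⬝ᵥ k = 1)
    (hplanar : ∀ t ∈ Set.Icc 0 ℓ, d₁ t ⬝ᵥ k = 0)
    (hpos : ∀ᵐ t ∂(volume.restrict (Set.Ioo 0 ℓ)), 0 < deriv d₁ t ⬝ᵥ d₃ t) :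
    (∀ t ∈ Set.Icc 0 ℓ, d₂ t = k) ∨ (∀ t ∈ Set.Icc 0 ℓ, d₂ t = -k) := by
  have hsq_ae : ∀ᵐ t ∂(volume.restrict (Icc 0 ℓ)), (k ⬝ᵥ d₂ t) ^ 2 = 1 := by
    rw [← Measure.restrict_congr_set Ioo_ae_eq_Icc]
    filter_upwards [hconstraint, hpos, ae_restrict_mem measurableSet_Ioo] with t hperp₂ hcurv ht
    have hd₁' := (hdiff t ht).1.hasDerivAt
    have hnear : Icc 0 ℓ ∈ 𝓝 t := Icc_mem_nhds ht.1 ht.2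
    obtain ⟨h11, h22, h12, h3⟩ := hframe t (mem_of_mem_nhds hnear)
    have hperp₁ : deriv d₁ t ⬝ᵥ d₁ t = 0 := by
      have h := hd₁'.dotProduct_eq_zero_of_eventually_eq hd₁'
        (eventually_of_mem hnear fun s hs => (hframe s hs).1)
      rw [dotProduct_comm (d₁ t)] at h
      linarith
    have hperpk : deriv d₁ t ⬝ᵥ k = 0 := by
      simpa using hd₁'.dotProduct_eq_zero_of_eventually_eq (hasDerivAt_const t k)
        (eventually_of_mem hnear hplanar)
    exact sq_dotProduct_eq_one_of_orthogonal h11 h22 h12 hk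
      (by rw [dotProduct_comm]; exact hplanar t (mem_of_mem_nhds hnear)) hperp₁ hperp₂ hperpk
      (h3 ▸ hcurv.ne')
  have hcont : ContinuousOn (fun t => k ⬝ᵥ d₂ t) (Icc 0 ℓ) :=
    (continuous_const.dotProduct continuous_id).comp_continuousOn hd₂cont
  have hsq : EqOn ((fun t => k ⬝ᵥ d₂ t) ^ 2) 1 (Icc 0 ℓ) :=
    Measure.eqOn_Icc_of_ae_eq volume hℓ.ne hsq_ae (hcont.pow 2) continuousOn_const
  refine (isPreconnected_Icc.eq_one_or_eq_neg_one_of_sq_eq hcont hsq).imp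
    (fun h t ht => ?_) (fun h t ht => ?_)
  · exact eq_of_dotProduct_eq_one (hframe t ht).2.1 hk (by rw [dotProduct_comm]; exact h ht)
  · refine eq_of_dotProduct_eq_one (hframe t ht).2.1 (by simpa using hk) ?_
    rw [dotProduct_neg, dotProduct_comm, show k ⬝ᵥ d₂ t = -1 from h ht, neg_neg]

/-- If a framed curve `(y, d₁, d₂, d₃)` with `y' = d₁`, `d₁'·d₂ = 0` a.e. is planar
(`d₁ · k ≡ 0` for a unit vector `k`) and has positive curvature `d₁'·d₃ > 0` a.e.,
then `d₂` is constant, equal to `k` or `−k`. -/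
theorem planar_frame_d2_const (ℓ : ℝ) (hℓ : 0 < ℓ)
    (y d₁ d₂ d₃ : ℝ → Fin 3 → ℝ) (k : Fin 3 → ℝ)
    (hy : ∀ t ∈ Set.Ioo 0 ℓ, HasDerivAt y (d₁ t) t)
    (hd₂cont : ContinuousOn d₂ (Set.Icc 0 ℓ))
    (hdiff : ∀ t ∈ Set.Ioo 0 ℓ, DifferentiableAt ℝ d₁ t ∧ DifferentiableAt ℝ d₂ t)
    (hframe : ∀ t ∈ Set.Icc 0 ℓ,
      d₁ t ⬝ᵥ d₁ t = 1 ∧ d₂ t ⬝ᵥ d₂ t = 1 ∧ d₁ t ⬝ᵥ d₂ t = 0 ∧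
      d₃ t = d₁ t ⨯₃ d₂ t)
    (hconstraint : ∀ᵐ t ∂(volume.restrict (Set.Ioo 0 ℓ)), deriv d₁ t ⬝ᵥ d₂ t = 0)
    (hk : k ⬝ᵥ k = 1)
    (hplanar : ∀ t ∈ Set.Icc 0 ℓ, d₁ t ⬝ᵥ k = 0)
    (hpos : ∀ᵐ t ∂(volume.restrict (Set.Ioo 0 ℓ)), 0 < deriv d₁ t ⬝ᵥ d₃ t) :
    (∀ t ∈ Set.Icc 0 ℓ, d₂ t = k) ∨ (∀ t ∈ Set.Icc 0 ℓ, d₂ t = -k) :=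
  planar_frame_d2_const_general ℓ hℓ d₁ d₂ d₃ k hd₂cont hdiff hframe hconstraint hk hplanar hpos
end
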